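/- arXiv:2410.14903 — 6 statements merged into one kernel-verified Lean document; each statement's English description precedes it below -/
import Mathlib

section
/- In the regularized fractal-lattice system with parameters (N,α), assuming f ∈ [0,1], α ∈ [0,1], and nonnegative initial data, for every fixed n ≤ N the partial energy E_n(t) = u_0(t) + u_1(t) + ⋯ + u_n(t), evaluated along times t that are integer multiples of τ_n = 2^{-n}, is nonincreasing in t. -/
/-!
Dynamics on the fractal space-time lattice (scales `n = 0,1,2,…`, turnover
times `τ_n = 2⁻ⁿ`).  The state of scale `n` at lattice time `t = m * τ_n`
is encoded as `u n m` (per-scale time index `m`).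
-/

/-- The transfer fraction `f_n(t)` of the `(N,α)`-regularized system at scale `n`
and per-scale time index `m` (so real time `t = m * 2⁻ⁿ`):
`f_n(t) = f (u_n(t), u_{n+1}(t))` for `n < N` and `f_N(t) = α`.
Note that `u_{n+1}(t)` has per-scale time index `2 * m`. -/
noncomputable def transfer (f : ℝ → ℝ → ℝ) (N : ℕ) (α : ℝ) (u : ℕ → ℕ → ℝ)
    (n m : ℕ) : ℝ :=
  if n < N then f (u n m) (u (n + 1) (2 * m)) else α

/-- `IsSol f N α a u` says that the field `{u_n(t)}`, encoded as `u n m` with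
`t = m * τ_n`, `τ_n = 2⁻ⁿ`, solves the `(N,α)`-regularized initial value
problem on the fractal lattice with initial data `a`:
* `u_n(0) = a_n`;
* for `n ≤ N` and `t = m * τ_n`,
  `u_n(t + τ_n) = (1 − f_n(t)) u_n(t) + χ_even(m) f_{n−1}(t) u_{n−1}(t)`,
  where `u_{−1} ≡ 0` (the incoming term is absent for `n = 0`) and `u_{n-1}(t)`
  has per-scale index `m / 2` (the incoming term is present only for even `m`);
* `u_n(t) = 0` for `n > N` and `t > 0`. -/
noncomputable def IsSol (f : ℝ → ℝ → ℝ) (N : ℕ) (α : ℝ) (a : ℕ → ℝ)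
    (u : ℕ → ℕ → ℝ) : Prop :=
  (∀ n, u n 0 = a n) ∧
  (∀ n, n ≤ N → ∀ m : ℕ,
    u n (m + 1) = (1 - transfer f N α u n m) * u n m +
      (if Even m ∧ n ≠ 0 then transfer f N α u (n - 1) (m / 2) * u (n - 1) (m / 2)
       else 0)) ∧
  (∀ n, N < n → ∀ m : ℕ, 0 < m → u n m = 0)

lemma ceil_half (m e : ℕ) (he : 0 < e) :
    (m + 2 * e - 1) / (2 * e) = ((m + 1) / 2 + e - 1) / e := by
  rcases Nat.even_or_odd m with ⟨a, rfl⟩ | ⟨a, rfl⟩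
  · have h1 : a + a + 2 * e - 1 = 2 * (a + e - 1) + 1 := by omega
    rw [h1, ← Nat.div_div_eq_div_mul]
    have h2 : (2 * (a + e - 1) + 1) / 2 = a + e - 1 := by omega
    rw [h2]; congr 1; omega
  · have h1 : 2 * a + 1 + 2 * e - 1 = 2 * (a + e) := by omega
    rw [h1, Nat.mul_div_mul_left _ _ (by norm_num : 0 < 2)]
    congr 1; omega

noncomputable def Epart (u : ℕ → ℕ → ℝ) (n m : ℕ) : ℝ :=
  ∑ k ∈ Finset.range (n + 1), u k ((m + 2 ^ (n - k) - 1) / 2 ^ (n - k))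

lemma Epart_succ (u : ℕ → ℕ → ℝ) (n m : ℕ) :
    Epart u (n + 1) m = Epart u n ((m + 1) / 2) + u (n + 1) m := by
  unfold Epart
  rw [Finset.sum_range_succ]
  congr 1
  · refine Finset.sum_congr rfl fun k hk => ?_
    have hk' : k ≤ n := Nat.lt_succ_iff.mp (Finset.mem_range.mp hk)
    have h1 : n + 1 - k = (n - k) + 1 := by omega
    congr 1
    rw [h1, pow_succ, mul_comm (2 ^ (n - k)) 2]
    exact ceil_half m (2 ^ (n - k)) (pow_pos (by norm_num) _)
  · simp

section
variable {f : ℝ → ℝ → ℝ} {N : ℕ} {α : ℝ} {a : ℕ → ℝ} {u : ℕ → ℕ → ℝ}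

lemma transfer_mem (hf : ∀ x y : ℝ, 0 ≤ x → 0 ≤ y → f x y ∈ Set.Icc (0 : ℝ) 1)
    (hα : α ∈ Set.Icc (0 : ℝ) 1) {n m : ℕ}
    (h1 : 0 ≤ u n m) (h2 : 0 ≤ u (n + 1) (2 * m)) :
    transfer f N α u n m ∈ Set.Icc (0 : ℝ) 1 := by
  unfold transfer
  split
  · exact hf _ _ h1 h2
  · exact hα

lemma sol_nonneg (hf : ∀ x y : ℝ, 0 ≤ x → 0 ≤ y → f x y ∈ Set.Icc (0 : ℝ) 1)
    (hα : α ∈ Set.Icc (0 : ℝ) 1) (ha : ∀ n, 0 ≤ a n) (hu : IsSol f N α a u) :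
    ∀ n m, 0 ≤ u n m := by
  obtain ⟨h0, hrec, hzero⟩ := hu
  suffices H : ∀ t : ℕ, ∀ n m, n ≤ N → m * 2 ^ (N - n) = t → 0 ≤ u n m by
    intro n m
    rcases le_or_gt n N with h | h
    · exact H _ n m h rfl
    · rcases Nat.eq_zero_or_pos m with hm | hm
      · rw [hm, h0]; exact ha n
      · rw [hzero n h m hm]
  intro t
  induction t using Nat.strong_induction_on with
  | _ t IH =>
    intro n m hn hm
    cases m with
    | zero => rw [h0]; exact ha n
    | succ m =>
      subst hm
      have hpow : 0 < 2 ^ (N - n) := pow_pos (by norm_num) _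
      have hlt : m * 2 ^ (N - n) < (m + 1) * 2 ^ (N - n) := by
        exact (Nat.mul_lt_mul_right hpow).mpr (Nat.lt_succ_self m)
      have hun : 0 ≤ u n m := IH _ hlt n m hn rfl
      have hun1 : 0 ≤ u (n + 1) (2 * m) := by
        rcases le_or_gt (n + 1) N with h | h
        · refine IH (2 * m * 2 ^ (N - (n + 1))) ?_ (n + 1) (2 * m) h rfl
          have he : N - n = (N - (n + 1)) + 1 := by omega
          have : 2 * m * 2 ^ (N - (n + 1)) = m * 2 ^ (N - n) := by
            rw [he, pow_succ]; ring
          rw [this]; exact hlt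
        · rcases Nat.eq_zero_or_pos (2 * m) with hm2 | hm2
          · rw [hm2, h0]; exact ha (n + 1)
          · rw [hzero (n + 1) h (2 * m) hm2]
      have htr : transfer f N α u n m ∈ Set.Icc (0 : ℝ) 1 :=
        transfer_mem hf hα hun hun1
      rw [hrec n hn m]
      have h1 : 0 ≤ (1 - transfer f N α u n m) * u n m :=
        mul_nonneg (by linarith [htr.2]) hun
      refine add_nonneg h1 ?_
      split
      · next hcond =>
        obtain ⟨⟨b, hb⟩, hn0⟩ := hcond
        have hb' : m / 2 = b := by omega
        have hm1 : 0 ≤ u (n - 1) (m / 2) := by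
          refine IH (m / 2 * 2 ^ (N - (n - 1))) ?_ (n - 1) (m / 2) (by omega) rfl
          have he : N - (n - 1) = (N - n) + 1 := by omega
          have hm' : 2 * (m / 2) = m := by omega
          have : m / 2 * 2 ^ (N - (n - 1)) = m * 2 ^ (N - n) := by
            rw [he, pow_succ]
            calc m / 2 * (2 ^ (N - n) * 2) = 2 * (m / 2) * 2 ^ (N - n) := by ring
              _ = m * 2 ^ (N - n) := by rw [hm']
          rw [this]; exact hlt
        have hm2 : 0 ≤ u (n - 1 + 1) (2 * (m / 2)) := by
          have h1 : n - 1 + 1 = n := by omega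
          have h2 : 2 * (m / 2) = m := by omega
          rw [h1, h2]; exact hun
        exact mul_nonneg (transfer_mem hf hα hm1 hm2).1 hm1
      · exact le_refl 0

lemma Epart_step (hu : IsSol f N α a u) :
    ∀ n, n ≤ N → ∀ m,
      Epart u n (m + 1) = Epart u n m - transfer f N α u n m * u n m := by
  obtain ⟨h0, hrec, hzero⟩ := hu
  intro n
  induction n with
  | zero =>
    intro _ m
    have h1 : Epart u 0 m = u 0 m := by simp [Epart]
    have h2 : Epart u 0 (m + 1) = u 0 (m + 1) := by simp [Epart]
    rw [h1, h2, hrec 0 (Nat.zero_le N) m, if_neg (by simp)]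
    ring
  | succ n IHn =>
    intro hN m
    have hn : n ≤ N := by omega
    rw [Epart_succ, Epart_succ, hrec (n + 1) hN m]
    rcases Nat.even_or_odd m with hm | hm
    · obtain ⟨b, hb⟩ := hm
      have hb' : m = 2 * b := by omega
      rw [if_pos ⟨⟨b, hb⟩, by omega⟩]
      have e1 : (m + 1 + 1) / 2 = b + 1 := by omega
      have e2 : (m + 1) / 2 = b := by omega
      have e3 : n + 1 - 1 = n := by omega
      have e4 : m / 2 = b := by omega
      rw [e1, e2, e3, e4, IHn hn b]
      ring
    · obtain ⟨b, hb⟩ := hm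
      rw [if_neg (by simp [hb, parity_simps])]
      have e1 : (m + 1 + 1) / 2 = b + 1 := by omega
      have e2 : (m + 1) / 2 = b + 1 := by omega
      rw [e1, e2]
      ring
end

/-- in the `(N,α)`-regularized fractal-lattice system with
`f ∈ [0,1]` on nonnegative arguments, `α ∈ [0,1]` and nonnegative initial data,
for every fixed `n ≤ N` the partial energy
`E_n(t) = u_0(t) + u_1(t) + ⋯ + u_n(t)`, evaluated along the times
`t = m * τ_n` (`τ_n = 2⁻ⁿ`), is nonincreasing in `t`.  Here the state `u_k(t)`
of a coarser scale `k < n` at a time `t` which is not a lattice time of scale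
`k` is the value at the nearest lattice time of scale `k`, i.e. the per-scale
index of `u_k` at time `m τ_n` is `⌈m / 2^(n-k)⌉ = (m + 2^(n-k) - 1) / 2^(n-k)`
(with natural division). -/
theorem partial_energy_antitone
    (f : ℝ → ℝ → ℝ) (hf : ∀ x y : ℝ, 0 ≤ x → 0 ≤ y → f x y ∈ Set.Icc (0 : ℝ) 1)
    (N : ℕ) (α : ℝ) (hα : α ∈ Set.Icc (0 : ℝ) 1)
    (a : ℕ → ℝ) (ha : ∀ n, 0 ≤ a n)
    (u : ℕ → ℕ → ℝ) (hu : IsSol f N α a u)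
    (n : ℕ) (hn : n ≤ N) :
    ∀ m m' : ℕ, m ≤ m' →
      ∑ k ∈ Finset.range (n + 1), u k ((m' + 2 ^ (n - k) - 1) / 2 ^ (n - k)) ≤
      ∑ k ∈ Finset.range (n + 1), u k ((m + 2 ^ (n - k) - 1) / 2 ^ (n - k)) := by
  have hnn := sol_nonneg hf hα ha hu
  intro m m' hmm
  induction m', hmm using Nat.le_induction with
  | base => exact le_refl _
  | succ m' hm IH =>
    refine le_trans ?_ IH
    show Epart u n (m' + 1) ≤ Epart u n m'
    rw [Epart_step hu n hn m']
    have htr : transfer f N α u n m' ∈ Set.Icc (0 : ℝ) 1 :=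
      transfer_mem hf hα (hnn n m') (hnn (n + 1) (2 * m'))
    nlinarith [mul_nonneg htr.1 (hnn n m')]
end

section
/- In the regularized fractal-lattice system with dissipation parameter α = 0 (and f ∈ [0,1], nonnegative initial data), total energy is conserved at integer times: for every integer t ≥ 1, Σ_{n=0}^{N} u_n(t) = Σ_{n=0}^{N} a_n. -/
/-- Summing a function supported on even indices over `range (2*M)` is the same
as summing its values at halves over `range M`. -/
lemma sum_even_half (M : ℕ) (g : ℕ → ℝ) :
    ∑ k ∈ Finset.range (2 * M), (if Even k then g (k / 2) else 0)
      = ∑ j ∈ Finset.range M, g j := by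
  induction M with
  | zero => simp
  | succ M ih =>
    have h2 : 2 * (M + 1) = (2 * M + 1) + 1 := by ring
    rw [h2, Finset.sum_range_succ, Finset.sum_range_succ, Finset.sum_range_succ, ih]
    have he : Even (2 * M) := even_two_mul M
    have ho : ¬ Even (2 * M + 1) := by simp [Nat.even_add_one, he]
    simp [he, ho, Nat.mul_div_cancel_left]

/-- Energy balance at scale `n` over one unit time interval: the change of
`u_n` equals the total incoming transfer from scale `n-1` minus the total
outgoing transfer from scale `n`. -/
lemma scale_change (f : ℝ → ℝ → ℝ) (N : ℕ) (a : ℕ → ℝ) (u : ℕ → ℕ → ℝ)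
    (hu : IsSol f N 0 a u) (t : ℕ) (n : ℕ) (hn : n ≤ N) :
    u n ((t + 1) * 2 ^ n) = u n (t * 2 ^ n)
      + (if n = 0 then 0 else ∑ j ∈ Finset.range (2 ^ (n - 1)),
           transfer f N 0 u (n - 1) (t * 2 ^ (n - 1) + j) * u (n - 1) (t * 2 ^ (n - 1) + j))
      - ∑ k ∈ Finset.range (2 ^ n),
           transfer f N 0 u n (t * 2 ^ n + k) * u n (t * 2 ^ n + k) := by
  obtain ⟨h0, hstep, hbig⟩ := hu
  set M := t * 2 ^ n with hM
  have key : ∀ K : ℕ, u n (M + K) = u n M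
      + ∑ k ∈ Finset.range K, (if Even (M + k) ∧ n ≠ 0 then
          transfer f N 0 u (n - 1) ((M + k) / 2) * u (n - 1) ((M + k) / 2) else 0)
      - ∑ k ∈ Finset.range K, transfer f N 0 u n (M + k) * u n (M + k) := by
    intro K
    induction K with
    | zero => simp
    | succ K ih =>
      rw [Finset.sum_range_succ, Finset.sum_range_succ, ← Nat.add_assoc,
        hstep n hn (M + K), ih]
      ring
  have hKey := key (2 ^ n)
  have hlhs : (t + 1) * 2 ^ n = M + 2 ^ n := by rw [hM]; ring
  rw [hlhs, hKey]
  congr 2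
  by_cases hn0 : n = 0
  · subst hn0
    simp
  · simp only [if_neg hn0]
    have hn1 : 2 ^ n = 2 * 2 ^ (n - 1) := by
      rw [← pow_succ']
      congr 1
      omega
    rw [hn1]
    rw [← sum_even_half (2 ^ (n - 1))
      (fun j => transfer f N 0 u (n - 1) (t * 2 ^ (n - 1) + j) * u (n - 1) (t * 2 ^ (n - 1) + j))]
    apply Finset.sum_congr rfl
    intro k hk
    have hMe : M = 2 * (t * 2 ^ (n - 1)) := by rw [hM, hn1]; ring
    have hpar : Even (M + k) ↔ Even k := by
      rw [hMe]
      constructor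
      · intro h
        rcases (Nat.even_add.mp h) with h'
        simp [even_two_mul] at h' ⊢
        tauto
      · intro h
        exact Even.add (even_two_mul _) h
    by_cases hke : Even k
    · have hdiv : (M + k) / 2 = t * 2 ^ (n - 1) + k / 2 := by
        rw [hMe]
        omega
      simp [hpar, hke, hn0, hdiv]
    · simp [hpar, hke]

/-- in the regularized fractal-lattice system with dissipation
parameter `α = 0` (and `f ∈ [0,1]` on nonnegative arguments, nonnegative
initial data), the total energy is conserved at integer times: for every
integer `t ≥ 1`, `Σ_{n=0}^{N} u_n(t) = Σ_{n=0}^{N} a_n`.  (The per-scale time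
index of `u_n` at the integer time `t` is `t * 2^n`.) -/
theorem total_energy_conserved_alpha_zero
    (f : ℝ → ℝ → ℝ) (hf : ∀ x y : ℝ, 0 ≤ x → 0 ≤ y → f x y ∈ Set.Icc (0 : ℝ) 1)
    (N : ℕ) (a : ℕ → ℝ) (ha : ∀ n, 0 ≤ a n)
    (u : ℕ → ℕ → ℝ) (hu : IsSol f N 0 a u) :
    ∀ t : ℕ, 1 ≤ t →
      ∑ n ∈ Finset.range (N + 1), u n (t * 2 ^ n) =
      ∑ n ∈ Finset.range (N + 1), a n := by
  have main : ∀ t : ℕ, ∑ n ∈ Finset.range (N + 1), u n (t * 2 ^ n)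
      = ∑ n ∈ Finset.range (N + 1), a n := by
    intro t
    induction t with
    | zero => simp [hu.1]
    | succ t ih =>
      rw [← ih]
      set D := fun n => ∑ k ∈ Finset.range (2 ^ n),
        transfer f N 0 u n (t * 2 ^ n + k) * u n (t * 2 ^ n + k) with hD
      have hstep : ∀ n ∈ Finset.range (N + 1),
          u n ((t + 1) * 2 ^ n) = u n (t * 2 ^ n) + (if n = 0 then 0 else D (n - 1)) - D n := by
        intro n hn
        exact scale_change f N a u hu t n (Nat.lt_succ_iff.mp (Finset.mem_range.mp hn))
      rw [Finset.sum_congr rfl hstep]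
      rw [Finset.sum_sub_distrib, Finset.sum_add_distrib]
      have hin : ∑ n ∈ Finset.range (N + 1), (if n = 0 then 0 else D (n - 1))
          = ∑ n ∈ Finset.range N, D n := by
        rw [Finset.sum_range_succ']
        simp
      have hout : ∑ n ∈ Finset.range (N + 1), D n = ∑ n ∈ Finset.range N, D n + D N :=
        Finset.sum_range_succ D N
      have hDN : D N = 0 := by
        rw [hD]
        apply Finset.sum_eq_zero
        intro k hk
        simp [transfer]
      rw [hin, hout, hDN]
      ring
  intro t ht
  exact main t
end

section
/- Scale invariance of the ideal dynamics: suppose the field {u_n(t)} satisfies the ideal lattice equations u_n(t+τ_n) = (1−f_n(t))u_n(t) + χ_even(t/τ_n) f_{n−1}(t) u_{n−1}(t) with f_n(t) = f(u_n(t),u_{n+1}(t)) at all scales n ≥ 1. Then the rescaled field v_n(t) := u_{n+1}(t/2) satisfies the same family of equations at all scales n ≥ 1 (with transfer fractions computed from v itself). -/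
/-!
The ideal system on the fractal lattice: scales `n = 0,1,2,…`, turnover times
`τ_n = 2⁻ⁿ`, and the state of scale `n` at time `t = m * τ_n` encoded as
`u n m`.  The ideal equation at scale `n ≥ 1` and time `t = m τ_n` reads
`u_n(t + τ_n) = (1 − f(u_n(t), u_{n+1}(t))) u_n(t)
              + χ_even(m) · f(u_{n−1}(t), u_n(t)) · u_{n−1}(t)`,
where `u_{n+1}(t)` has per-scale index `2m` and, for even `m`, `u_{n−1}(t)`
has per-scale index `m / 2`.
-/

/-- `IdealAtSmallScales f u` : the field `u` satisfies the ideal lattice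
equations at all scales `n ≥ 1`. -/
def IdealAtSmallScales (f : ℝ → ℝ → ℝ) (u : ℕ → ℕ → ℝ) : Prop :=
  ∀ n, 1 ≤ n → ∀ m : ℕ,
    u n (m + 1) = (1 - f (u n m) (u (n + 1) (2 * m))) * u n m +
      (if Even m then f (u (n - 1) (m / 2)) (u n m) * u (n - 1) (m / 2) else 0)

/-- scale invariance of the ideal dynamics: if the field
`{u_n(t)}` satisfies the ideal lattice equations at all scales `n ≥ 1`, then
the rescaled field `v_n(t) := u_{n+1}(t/2)` (in per-scale indices:
`v n m = u (n+1) m`) satisfies the same family of equations at all scales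
`n ≥ 1`, with the transfer fractions computed from `v` itself. -/
theorem ideal_scale_invariance (f : ℝ → ℝ → ℝ) (u : ℕ → ℕ → ℝ)
    (hu : IdealAtSmallScales f u) :
    IdealAtSmallScales f (fun n m => u (n + 1) m) := by
  intro n hn m
  simp only
  rw [show n - 1 + 1 = n from Nat.sub_add_cancel hn]
  simpa using hu (n + 1) (by omega) m
end

section
/- RG relation (Theorem 1): for every N ≥ 0 and α ∈ [0,1], the regularized flow maps satisfy φ^{(N+1,α)} = R[φ^{(N,α)}], where the renormalization group operator R acting on maps φ : 𝕌 → 𝕌 is defined by R[φ] = π_0 − ξ + σ_− ∘ φ ∘ (ξ + φ ∘ σ_+). -/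
/-- `sol1 u` is the state `u(1)` at the large-scale turnover time `τ_0 = 1`:
the `n`-th component is `u_n(1)`, whose per-scale time index is `2^n`. -/
def sol1 (u : ℕ → ℕ → ℝ) : ℕ → ℝ := fun n => u n (2 ^ n)

/-- The left shift `σ₊(a) = (a_1, a_2, …)`. -/
def sigmaPlus (a : ℕ → ℝ) : ℕ → ℝ := fun n => a (n + 1)

/-- The right shift `σ₋(a) = (0, a_0, a_1, …)`. -/
def sigmaMinus (a : ℕ → ℝ) : ℕ → ℝ := fun n => if n = 0 then 0 else a (n - 1)

/-- The large-scale projector `π₀(a) = (a_0, 0, 0, …)`. -/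
def piZero (a : ℕ → ℝ) : ℕ → ℝ := fun n => if n = 0 then a 0 else 0

/-- The energy transfer map `ξ(a) = (f(a_0,a_1)·a_0, 0, 0, …)`. -/
def xiMap (f : ℝ → ℝ → ℝ) (a : ℕ → ℝ) : ℕ → ℝ :=
  fun n => if n = 0 then f (a 0) (a 1) * a 0 else 0

/-- RG relation, Theorem 1: for every `N ≥ 0` and
`α ∈ [0,1]` the regularized flow maps satisfy `φ^{(N+1,α)} = R[φ^{(N,α)}]`,
where `R[φ] = π₀ − ξ + σ₋ ∘ φ ∘ (ξ + φ ∘ σ₊)`.  In terms of solutions: if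
`u` solves the `(N+1,α)`-problem with data `a`, `v` solves the
`(N,α)`-problem with data `σ₊(a)`, and `w` solves the `(N,α)`-problem with
data `ξ(a) + sol1 v` (that is, `ξ(a) + φ^{(N,α)}(σ₊ a)`), then
`sol1 u = π₀(a) − ξ(a) + σ₋(sol1 w)`. -/
theorem RG_relation
    (f : ℝ → ℝ → ℝ) (hf : ∀ x y : ℝ, 0 ≤ x → 0 ≤ y → f x y ∈ Set.Icc (0 : ℝ) 1)
    (N : ℕ) (α : ℝ) (hα : α ∈ Set.Icc (0 : ℝ) 1)
    (a : ℕ → ℝ) (ha : ∀ n, 0 ≤ a n)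
    (u v w : ℕ → ℕ → ℝ)
    (hu : IsSol f (N + 1) α a u)
    (hv : IsSol f N α (sigmaPlus a) v)
    (hw : IsSol f N α (xiMap f a + sol1 v) w) :
    sol1 u = piZero a - xiMap f a + sigmaMinus (sol1 w) := by
  obtain ⟨hu0, huR, huZ⟩ := hu
  obtain ⟨hv0, hvR, hvZ⟩ := hv
  obtain ⟨hw0, hwR, hwZ⟩ := hw
  -- First half: `u` shifted by one scale agrees with `v` up to time 1/2.
  have keyA : ∀ μ n m, m * 2 ^ (N + 1 - n) ≤ μ → m ≤ 2 ^ n → (n = 0 → m = 0) →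
      u (n + 1) m = v n m := by
    intro μ
    induction μ using Nat.strong_induction_on with
    | _ μ IH =>
    intro n m hμ hm h0
    match m with
    | 0 => rw [hu0, hv0]; rfl
    | (m + 1) =>
      have hn0 : n ≠ 0 := fun h => by simpa using h0 h
      have hp : (0:ℕ) < 2 ^ (N + 1 - n) := pow_pos (by norm_num) _
      by_cases hnN : n ≤ N
      · have hlt : m * 2 ^ (N + 1 - n) < μ :=
          lt_of_lt_of_le (Nat.mul_lt_mul_of_pos_right (Nat.lt_succ_self m) hp) hμ
        have hIH1 : u (n + 1) m = v n m :=
          IH _ hlt n m le_rfl (le_trans (Nat.le_succ m) hm) (fun h => absurd h hn0)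
        have hpow : 2 ^ (n + 1) = 2 * 2 ^ n := by rw [pow_succ]; ring
        have hT : transfer f (N + 1) α u (n + 1) m = transfer f N α v n m := by
          simp only [transfer]
          by_cases hc : n < N
          · have hmeas : 2 * m * 2 ^ (N + 1 - (n + 1)) = m * 2 ^ (N + 1 - n) := by
              rw [show N + 1 - (n + 1) = N - n by omega,
                show N + 1 - n = (N - n) + 1 by omega, pow_succ]
              ring
            have hIH2 : u (n + 2) (2 * m) = v (n + 1) (2 * m) :=
              IH _ (lt_of_le_of_lt (le_of_eq hmeas) hlt) (n + 1) (2 * m) le_rfl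
                (by omega) (by omega)
            rw [if_pos (by omega), if_pos hc, hIH1, hIH2]
          · rw [if_neg (by omega), if_neg hc]
        rw [huR (n + 1) (by omega) m, hvR n hnN m]
        by_cases hEv : Even m
        · obtain ⟨n', rfl⟩ : ∃ n', n = n' + 1 := ⟨n - 1, by omega⟩
          obtain ⟨k, hk⟩ := hEv
          have hpow' : 2 ^ (n' + 1) = 2 * 2 ^ n' := by rw [pow_succ]; ring
          have hm2 : m / 2 = k := by omega
          have hmeas : k * 2 ^ (N + 1 - n') = m * 2 ^ (N + 1 - (n' + 1)) := by
            rw [hk, show N + 1 - n' = (N + 1 - (n' + 1)) + 1 by omega, pow_succ]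
            ring
          have hIH3 : u (n' + 1) k = v n' k :=
            IH _ (lt_of_le_of_lt (le_of_eq hmeas) hlt) n' k le_rfl (by omega)
              (by intro h; subst h; norm_num at hm; omega)
          have hTi : transfer f (N + 1) α u (n' + 1) k = transfer f N α v n' k := by
            simp only [transfer]
            by_cases hc : n' < N
            · rw [if_pos (by omega), if_pos hc, hIH3, show 2 * k = m by omega, hIH1]
            · rw [if_neg (by omega), if_neg hc]
          have hcu : Even m ∧ (n' + 1 + 1 : ℕ) ≠ 0 := ⟨⟨k, hk⟩, Nat.succ_ne_zero _⟩
          have hcv : Even m ∧ (n' + 1 : ℕ) ≠ 0 := ⟨⟨k, hk⟩, Nat.succ_ne_zero _⟩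
          rw [if_pos hcu, if_pos hcv, show (n' + 1 + 1) - 1 = n' + 1 from rfl,
            show (n' + 1) - 1 = n' from rfl, hm2, hTi, hIH3, hT, hIH1]
        · rw [if_neg (fun h => hEv h.1), if_neg (fun h => hEv h.1), hT, hIH1]
      · rw [huZ (n + 1) (by omega) (m + 1) (by omega),
          hvZ n (by omega) (m + 1) (by omega)]
  -- Second half.
  have keyB : ∀ μ n m, m * 2 ^ (N + 1 - n) ≤ μ → m ≤ 2 ^ n →
      u (n + 1) (2 ^ n + m) = w n m := by
    intro μ
    induction μ using Nat.strong_induction_on with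
    | _ μ IH =>
    intro n m hμ hm
    match m with
    | 0 =>
      have hw0' : w n 0 = xiMap f a n + v n (2 ^ n) := by rw [hw0]; rfl
      match n with
      | 0 =>
        have h1 : u 1 1 = (1 - transfer f (N + 1) α u 1 0) * u 1 0
            + transfer f (N + 1) α u 0 0 * u 0 0 := by
          have h := huR 1 (by omega) 0
          rw [if_pos ⟨Even.zero, one_ne_zero⟩] at h
          simpa using h
        have h2 : v 0 1 = (1 - transfer f N α v 0 0) * v 0 0 := by
          have h := hvR 0 (Nat.zero_le N) 0
          rw [if_neg (by simp)] at h
          simpa using h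
        have hT0 : transfer f (N + 1) α u 0 0 = f (a 0) (a 1) := by
          simp only [transfer, if_pos (Nat.succ_pos N), hu0, Nat.mul_zero]
        have hT1 : transfer f (N + 1) α u 1 0 = transfer f N α v 0 0 := by
          simp only [transfer]
          by_cases hc : 0 < N
          · rw [if_pos (by omega), if_pos hc]
            simp [hu0, hv0, sigmaPlus]
          · rw [if_neg (by omega), if_neg hc]
        rw [show (2:ℕ) ^ 0 + 0 = 1 by norm_num, h1, hw0',
          show (2:ℕ) ^ 0 = 1 by norm_num, h2, hT0, hT1, hu0, hu0, hv0, xiMap]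
        simp only [if_pos rfl, if_true, sigmaPlus]
        ring
      | (n' + 1) =>
        rw [Nat.add_zero, hw0', xiMap, if_neg (Nat.succ_ne_zero n'), zero_add]
        exact keyA (2 ^ (n' + 1) * 2 ^ (N + 1 - (n' + 1))) (n' + 1) (2 ^ (n' + 1))
          le_rfl le_rfl (by simp)
    | (m + 1) =>
      have hp : (0:ℕ) < 2 ^ (N + 1 - n) := pow_pos (by norm_num) _
      by_cases hnN : n ≤ N
      · have hlt : m * 2 ^ (N + 1 - n) < μ :=
          lt_of_lt_of_le (Nat.mul_lt_mul_of_pos_right (Nat.lt_succ_self m) hp) hμ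
        have hIH1 : u (n + 1) (2 ^ n + m) = w n m :=
          IH _ hlt n m le_rfl (le_trans (Nat.le_succ m) hm)
        have hpow : 2 ^ (n + 1) = 2 * 2 ^ n := by rw [pow_succ]; ring
        rw [show 2 ^ n + (m + 1) = (2 ^ n + m) + 1 by omega,
          huR (n + 1) (by omega) (2 ^ n + m), hwR n hnN m]
        have hT : transfer f (N + 1) α u (n + 1) (2 ^ n + m)
            = transfer f N α w n m := by
          simp only [transfer]
          by_cases hc : n < N
          · have hmeas : 2 * m * 2 ^ (N + 1 - (n + 1)) = m * 2 ^ (N + 1 - n) := by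
              rw [show N + 1 - (n + 1) = N - n by omega,
                show N + 1 - n = (N - n) + 1 by omega, pow_succ]
              ring
            have hIH2 : u (n + 2) (2 ^ (n + 1) + 2 * m) = w (n + 1) (2 * m) :=
              IH _ (lt_of_le_of_lt (le_of_eq hmeas) hlt) (n + 1) (2 * m) le_rfl
                (by omega)
            rw [if_pos (by omega), if_pos hc, hIH1,
              show 2 * (2 ^ n + m) = 2 ^ (n + 1) + 2 * m by omega, hIH2]
          · rw [if_neg (by omega), if_neg hc]
        match n, hm, hnN, hT, hIH1, hpow with
        | 0, hm, hnN, hT, hIH1, hpow =>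
          have hm0 : m = 0 := by norm_num at hm; omega
          subst hm0
          rw [if_neg (by norm_num [Nat.even_add_one] :
                ¬(Even (2 ^ 0 + 0) ∧ (0 + 1 : ℕ) ≠ 0)),
            if_neg (by simp : ¬(Even 0 ∧ (0:ℕ) ≠ 0)), hT, hIH1]
        | (n' + 1), hm, hnN, hT, hIH1, hpow =>
          have hpow' : 2 ^ (n' + 1) = 2 * 2 ^ n' := by rw [pow_succ]; ring
          have he2 : Even (2 ^ (n' + 1)) := ⟨2 ^ n', by omega⟩
          have hev : Even (2 ^ (n' + 1) + m) ↔ Even m := by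
            rw [Nat.even_add]
            simp [he2]
          by_cases hEv : Even m
          · obtain ⟨k, hk⟩ := hEv
            have hdiv : (2 ^ (n' + 1) + m) / 2 = 2 ^ n' + k := by omega
            have hmeas : k * 2 ^ (N + 1 - n') = m * 2 ^ (N + 1 - (n' + 1)) := by
              rw [hk, show N + 1 - n' = (N + 1 - (n' + 1)) + 1 by omega, pow_succ]
              ring
            have hIH3 : u (n' + 1) (2 ^ n' + k) = w n' k :=
              IH _ (lt_of_le_of_lt (le_of_eq hmeas) hlt) n' k le_rfl (by omega)
            have hTi : transfer f (N + 1) α u (n' + 1) (2 ^ n' + k)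
                = transfer f N α w n' k := by
              simp only [transfer]
              by_cases hc : n' < N
              · rw [if_pos (by omega), if_pos hc, hIH3,
                  show 2 * (2 ^ n' + k) = 2 ^ (n' + 1) + m by omega, hIH1,
                  show 2 * k = m by omega]
              · rw [if_neg (by omega), if_neg hc]
            have hcu : Even (2 ^ (n' + 1) + m) ∧ (n' + 1 + 1 : ℕ) ≠ 0 :=
              ⟨hev.mpr ⟨k, hk⟩, Nat.succ_ne_zero _⟩
            have hcw : Even m ∧ (n' + 1 : ℕ) ≠ 0 := ⟨⟨k, hk⟩, Nat.succ_ne_zero _⟩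
            rw [if_pos hcu, if_pos hcw, show (n' + 1 + 1) - 1 = n' + 1 from rfl,
              show (n' + 1) - 1 = n' from rfl, hdiv, show m / 2 = k by omega,
              hTi, hIH3, hT, hIH1]
          · rw [if_neg (fun h => hEv (hev.mp h.1)), if_neg (fun h => hEv h.1),
              hT, hIH1]
      · rw [huZ (n + 1) (by omega) (2 ^ n + (m + 1)) (by positivity),
          hwZ n (by omega) (m + 1) (by omega)]
  -- Assemble.
  funext n
  match n with
  | 0 =>
    have h1 : u 0 1 = (1 - transfer f (N + 1) α u 0 0) * u 0 0 := by
      have h := huR 0 (Nat.zero_le _) 0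
      rw [if_neg (by simp)] at h
      simpa using h
    have hT0 : transfer f (N + 1) α u 0 0 = f (a 0) (a 1) := by
      simp only [transfer, if_pos (Nat.succ_pos N), hu0, Nat.mul_zero]
    simp only [sol1, pow_zero, Pi.add_apply, Pi.sub_apply, piZero, xiMap, sigmaMinus,
      if_pos rfl, if_true, h1, hT0, hu0]
    ring
  | (n + 1) =>
    have h := keyB (2 ^ n * 2 ^ (N + 1 - n)) n (2 ^ n) le_rfl le_rfl
    simp only [sol1, Pi.add_apply, Pi.sub_apply, piZero, xiMap, sigmaMinus,
      if_neg (Nat.succ_ne_zero n), Nat.add_sub_cancel]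
    rw [show 2 ^ (n + 1) = 2 ^ n + 2 ^ n by rw [pow_succ]; ring, h]
    ring
end

section
/- Special case of Theorem 2: let {u_n(t)} be the solution of the (N,α)-regularized initial value problem with N ≥ 2 and initial data a. Then the state at time t = 3/4 from scale 2 onward is given by (u_2(3/4), u_3(3/4), …) = Ψ_2 ∘ Ψ_1(a), where Ψ_1 = ξ + φ^{(N−1,α)} ∘ σ_+ and Ψ_2 = ξ + φ^{(N−2,α)} ∘ σ_+. -/
/-!
Seen from scale `1` onward, the `(N,α)` system is the `(N-1,α)` system, except that scale `1`
receives energy from scale `0` at the integer times. Up to time `τ₁` only the transfer at time `0`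
enters, and it is `ξ(a)`; what scale `0` does later reaches the scales `n ≥ 1` only after time `τ₀`.
Hence `(u_1, u_2, …)(τ₁) = ξ(a) + φ^{(N-1,α)}(σ₊ a) = Ψ₁(a)`. The state `u` seen from scale `1` and
from time `τ₁` on solves the `(N-1,α)` equations at its scales `n ≥ 1` again, so the same argument,
one scale further, gives `(u_2, u_3, …)(τ₁ + τ₂) = Ψ₂(Ψ₁(a))`.
-/

noncomputable def latticeStep (f : ℝ → ℝ → ℝ) (M : ℕ) (α : ℝ) (u : ℕ → ℕ → ℝ) (n m : ℕ) : ℝ :=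
  (1 - transfer f M α u n m) * u n m +
    (if Even m ∧ n ≠ 0 then transfer f M α u (n - 1) (m / 2) * u (n - 1) (m / 2) else 0)

/-- The equations of the `(M,α)` system at the scales `n ≥ 1` only. Scale `0` is left free: it
plays the part of a larger scale, outside the system, that feeds energy into scale `1`. -/
structure IsInteriorSol (f : ℝ → ℝ → ℝ) (M : ℕ) (α : ℝ) (u : ℕ → ℕ → ℝ) : Prop where
  step : ∀ n, n ≠ 0 → n ≤ M → ∀ m, u n (m + 1) = latticeStep f M α u n m
  vanish : ∀ n, M < n → ∀ m, 0 < m → u n m = 0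

/-- `u` seen from scale `1` onward and from time `s τ₁` on: its `(n, m)` entry is
`u_{n+1}(s τ₁ + m τ_{n+1})`. -/
def shiftField (u : ℕ → ℕ → ℝ) (s : ℕ) : ℕ → ℕ → ℝ := fun n m => u (n + 1) (2 ^ n * s + m)

section

variable {f : ℝ → ℝ → ℝ} {M : ℕ} {α : ℝ}

theorem IsSol.isInteriorSol {a : ℕ → ℝ} {u : ℕ → ℕ → ℝ} (h : IsSol f M α a u) :
    IsInteriorSol f M α u :=
  ⟨fun n _ hn m => h.2.1 n hn m, h.2.2⟩

theorem transfer_shiftField (u : ℕ → ℕ → ℝ) (s n m : ℕ) :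
    transfer f M α (shiftField u s) n m = transfer f (M + 1) α u (n + 1) (2 ^ n * s + m) := by
  have h : 2 ^ (n + 1) * s + 2 * m = 2 * (2 ^ n * s + m) := by ring
  simp only [transfer, shiftField, h, Nat.add_lt_add_iff_right]

theorem latticeStep_shiftField (u : ℕ → ℕ → ℝ) (s m : ℕ) {n : ℕ} (hn : n ≠ 0) :
    latticeStep f M α (shiftField u s) n m = latticeStep f (M + 1) α u (n + 1) (2 ^ n * s + m) := by
  obtain ⟨k, rfl⟩ := Nat.exists_eq_succ_of_ne_zero hn
  have hpow : 2 ^ (k + 1) * s = 2 * (2 ^ k * s) := by ring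
  have heven : Even (2 ^ (k + 1) * s + m) ↔ Even m := by
    rw [hpow, Nat.even_add]; simp
  unfold latticeStep
  rw [transfer_shiftField]
  congr 1
  simp only [heven, ne_eq, Nat.succ_ne_zero, not_false_eq_true, and_true, Nat.add_sub_cancel]
  split_ifs with hm
  · obtain ⟨r, rfl⟩ := hm
    have hdiv : (2 ^ (k + 1) * s + (r + r)) / 2 = 2 ^ k * s + (r + r) / 2 := by omega
    rw [hdiv, transfer_shiftField]
    rfl
  · rfl

theorem IsInteriorSol.shift {u : ℕ → ℕ → ℝ} (h : IsInteriorSol f (M + 1) α u) (s : ℕ) :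
    IsInteriorSol f M α (shiftField u s) where
  step n hn hnM m := by
    rw [latticeStep_shiftField u s m hn, ← h.step (n + 1) n.succ_ne_zero (by omega)]
    rfl
  vanish n hn m hm := h.vanish (n + 1) (by omega) _ (by omega)

theorem latticeStep_congr {u v : ℕ → ℕ → ℝ} {n m : ℕ} (h : u n m = v n m)
    (hup : u (n + 1) (2 * m) = v (n + 1) (2 * m))
    (hdown : Even m → n ≠ 0 → u (n - 1) (m / 2) = v (n - 1) (m / 2)) :
    latticeStep f M α u n m = latticeStep f M α v n m := by
  have hout : transfer f M α u n m = transfer f M α v n m := by simp only [transfer, h, hup]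
  unfold latticeStep
  rw [hout, h]
  congr 1
  split_ifs with hmn
  · obtain ⟨⟨r, rfl⟩, hn⟩ := hmn
    have hr : 2 * ((r + r) / 2) = r + r := by omega
    have hin : transfer f M α u (n - 1) ((r + r) / 2) = transfer f M α v (n - 1) ((r + r) / 2) := by
      simp only [transfer, hr, Nat.sub_add_cancel (Nat.one_le_iff_ne_zero.mpr hn), h,
        hdown ⟨r, rfl⟩ hn]
    rw [hin, hdown ⟨r, rfl⟩ hn]
  · rfl

/-- `u_n(t + τ_n)` depends only on `u_{n-1}, u_n, u_{n+1}` at time `t`, so the free scale `0` can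
first make a difference in scale `1` at time `τ₀ + τ₁`; the recursion runs on time counted in units
of `τ_{M+1}`. -/
theorem IsInteriorSol.eq_of_le_two_pow {u v : ℕ → ℕ → ℝ} (hu : IsInteriorSol f M α u)
    (hv : IsInteriorSol f M α v) (h0 : ∀ n, u n 0 = v n 0) :
    ∀ n m, m ≤ 2 ^ n → (n = 0 → m = 0) → u n m = v n m
  | n, 0, _, _ => h0 n
  | n, m + 1, hm, hn0 => by
    have hn : n ≠ 0 := fun h => m.succ_ne_zero (hn0 h)
    by_cases hnM : n ≤ M
    · have hpow : 2 ^ n = 2 * 2 ^ (n - 1) := by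
        rw [← pow_succ', Nat.sub_add_cancel (Nat.one_le_iff_ne_zero.mpr hn)]
      rw [hu.step n hn hnM m, hv.step n hn hnM m]
      refine latticeStep_congr (eq_of_le_two_pow hu hv h0 n m (by omega) (by omega))
        (eq_of_le_two_pow hu hv h0 (n + 1) (2 * m) (by rw [pow_succ]; omega) (by omega))
        fun hm2 _ => eq_of_le_two_pow hu hv h0 (n - 1) (m / 2) (by omega) fun h => ?_
      rw [show n = 1 by omega] at hm
      omega
    · rw [hu.vanish n (by omega) _ m.succ_pos, hv.vanish n (by omega) _ m.succ_pos]
termination_by n m => m * 2 ^ (M + 1 - n)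
decreasing_by
  all_goals
    obtain ⟨e, he⟩ : ∃ e, M + 1 - n = e + 1 := ⟨M - n, by omega⟩
    have hp : 0 < 2 ^ e := by positivity
  · rw [he]
    exact Nat.mul_lt_mul_of_pos_right m.lt_succ_self (by positivity)
  · rw [he, show M + 1 - (n + 1) = e by omega, pow_succ]
    nlinarith
  · obtain ⟨r, rfl⟩ := hm2
    rw [he, show M + 1 - (n - 1) = e + 1 + 1 by omega, show (r + r) / 2 = r by omega, pow_succ,
      pow_succ]
    nlinarith

/-- `(U_1(τ₁), U_2(τ₁), …) = Ψ(c)` with `Ψ = ξ + φ^{(M,α)} ∘ σ₊`, where `c = U(0)` and `V` is the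
flow of `φ^{(M,α)}` started at `σ₊ c`. -/
theorem IsInteriorSol.apply_succ_two_pow {U V : ℕ → ℕ → ℝ} {c : ℕ → ℝ}
    (hU : IsInteriorSol f (M + 1) α U) (hc : ∀ n, U n 0 = c n) (hV : IsSol f M α (sigmaPlus c) V)
    (k : ℕ) : U (k + 1) (2 ^ k) = xiMap f c k + sol1 V k := by
  cases k with
  | zero =>
    have hout : transfer f M α V 0 0 = transfer f (M + 1) α U 1 0 := by
      simp [transfer, hV.1, sigmaPlus, hc]
    have hV0 : V 0 1 = (1 - transfer f (M + 1) α U 1 0) * U 1 0 := by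
      simp [hV.2.1 0 M.zero_le 0, hout, hV.1, sigmaPlus, hc]
    have hU1 : U 1 1 = (1 - transfer f (M + 1) α U 1 0) * U 1 0 + f (c 0) (c 1) * c 0 := by
      simp [hU.step 1 one_ne_zero (by omega) 0, latticeStep, transfer, hc]
    show U 1 1 = f (c 0) (c 1) * c 0 + V 0 1
    rw [hU1, hV0]
    ring
  | succ k =>
    have hcone := (hU.shift 0).eq_of_le_two_pow hV.isInteriorSol
      (fun n => by simp [shiftField, hV.1, sigmaPlus, hc]) (k + 1) (2 ^ (k + 1)) le_rfl (by omega)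
    simpa [shiftField, xiMap, sol1] using hcone

end

theorem theorem2_special_case_general
    (f : ℝ → ℝ → ℝ)
    (N : ℕ) (hN : 2 ≤ N) (α : ℝ)
    (a : ℕ → ℝ)
    (u v w : ℕ → ℕ → ℝ)
    (hu : IsSol f N α a u)
    (hv : IsSol f (N - 1) α (sigmaPlus a) v)
    (b : ℕ → ℝ) (hb : b = xiMap f a + sol1 v)
    (hw : IsSol f (N - 2) α (sigmaPlus b) w) :
    ∀ j : ℕ, u (2 + j) (3 * 2 ^ j) = xiMap f b j + sol1 w j := by
  obtain ⟨M, rfl⟩ : ∃ M, N = M + 2 := ⟨N - 2, by omega⟩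
  have hΨ₁ : ∀ n, shiftField u 1 n 0 = b n := fun n => by
    simpa [shiftField, hb] using hu.isInteriorSol.apply_succ_two_pow hu.1 hv n
  intro j
  have hΨ₂ := (hu.isInteriorSol.shift 1).apply_succ_two_pow hΨ₁ hw j
  rw [← hΨ₂, shiftField]
  congr 1 <;> ring

/-- special case of Theorem 2: let `u` solve the
`(N,α)`-regularized initial value problem with `N ≥ 2` and data `a`.  Let
`v` solve the `(N−1,α)` problem with data `σ₊(a)` (so that
`Ψ₁(a) = ξ(a) + φ^{(N−1,α)}(σ₊ a) = ξ(a) + sol1 v =: b`), and let `w` solve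
the `(N−2,α)` problem with data `σ₊(b)` (so that
`Ψ₂(b) = ξ(b) + φ^{(N−2,α)}(σ₊ b) = ξ(b) + sol1 w`).  Then
`(u_2(3/4), u_3(3/4), …) = Ψ₂ ∘ Ψ₁ (a)`; in per-scale indices the `j`-th
component `u_{2+j}(3/4)` of the left-hand side is `u (2+j) (3 * 2^j)`. -/
theorem theorem2_special_case
    (f : ℝ → ℝ → ℝ) (hf : ∀ x y : ℝ, 0 ≤ x → 0 ≤ y → f x y ∈ Set.Icc (0 : ℝ) 1)
    (N : ℕ) (hN : 2 ≤ N) (α : ℝ) (hα : α ∈ Set.Icc (0 : ℝ) 1)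
    (a : ℕ → ℝ) (ha : ∀ n, 0 ≤ a n)
    (u v w : ℕ → ℕ → ℝ)
    (hu : IsSol f N α a u)
    (hv : IsSol f (N - 1) α (sigmaPlus a) v)
    (b : ℕ → ℝ) (hb : b = xiMap f a + sol1 v)
    (hw : IsSol f (N - 2) α (sigmaPlus b) w) :
    ∀ j : ℕ, u (2 + j) (3 * 2 ^ j) = xiMap f b j + sol1 w j :=
  theorem2_special_case_general f N hN α a u v w hu hv b hb hw
end

section
/- Period-2 RG limit: suppose the even and odd subsequences of RG iterates converge, φ^{(2M)} → φ_a and φ^{(2M+1)} → φ_b as M → ∞, in the strong sense that φ^{(2M)}(a^{(M)}) → φ_a(a) (respectively for odd indices) whenever a^{(M)} → a componentwise. Then R[φ_a] = φ_b and R[φ_b] = φ_a; in particular, φ_a and φ_b are fixed points of R ∘ R. -/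
/-- The renormalization group operator
`R[φ] = π₀ − ξ + σ₋ ∘ φ ∘ (ξ + φ ∘ σ₊)` acting on maps of sequences. -/
def RG (f : ℝ → ℝ → ℝ) (φ : (ℕ → ℝ) → (ℕ → ℝ)) : (ℕ → ℝ) → (ℕ → ℝ) :=
  fun a => piZero a - xiMap f a + sigmaMinus (φ (xiMap f a + φ (sigmaPlus a)))

open Filter in
lemma RG_limit_aux (f : ℝ → ℝ → ℝ) (Φ : ℕ → (ℕ → ℝ) → (ℕ → ℝ))
    (φa φb : (ℕ → ℝ) → (ℕ → ℝ))
    (h1 : ∀ (A : ℕ → ℕ → ℝ) (a : ℕ → ℝ),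
      (∀ n, Tendsto (fun M => A M n) atTop (nhds (a n))) →
      ∀ n, Tendsto (fun M => Φ M (A M) n) atTop (nhds (φa a n)))
    (h2 : ∀ (a : ℕ → ℝ) (n : ℕ),
      Tendsto (fun M => RG f (Φ M) a n) atTop (nhds (φb a n))) :
    RG f φa = φb := by
  funext a n
  have hσ : ∀ k, Tendsto (fun M => Φ M (sigmaPlus a) k) atTop
      (nhds (φa (sigmaPlus a) k)) :=
    h1 (fun _ => sigmaPlus a) (sigmaPlus a) (fun k => tendsto_const_nhds)
  have hB : ∀ k, Tendsto (fun M => (xiMap f a + Φ M (sigmaPlus a)) k) atTop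
      (nhds ((xiMap f a + φa (sigmaPlus a)) k)) := by
    intro k
    exact (tendsto_const_nhds.add (hσ k))
  have hΦB : ∀ k, Tendsto (fun M => Φ M (xiMap f a + Φ M (sigmaPlus a)) k) atTop
      (nhds (φa (xiMap f a + φa (sigmaPlus a)) k)) :=
    h1 (fun M => xiMap f a + Φ M (sigmaPlus a)) _ hB
  have hlim : Tendsto (fun M => RG f (Φ M) a n) atTop (nhds (RG f φa a n)) := by
    simp only [RG, Pi.add_apply, Pi.sub_apply, sigmaMinus]
    split_ifs with h
    · exact (tendsto_const_nhds :
        Tendsto (fun _ : ℕ => piZero a n - xiMap f a n + 0) atTop _)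
    · exact (tendsto_const_nhds.add (hΦB (n - 1)))
  exact tendsto_nhds_unique hlim (h2 a n)

/-- period-2 RG limit: suppose the even and odd
subsequences of the RG iterates `φ^{(M)} = R^M[φ^{(0)}]` converge,
`φ^{(2M)} → φ_a` and `φ^{(2M+1)} → φ_b`, in the strong sense that
`φ^{(2M)}(a^{(M)}) → φ_a(a)` componentwise (respectively for odd indices)
whenever `a^{(M)} → a` componentwise.  Then `R[φ_a] = φ_b` and
`R[φ_b] = φ_a`; in particular `φ_a` and `φ_b` are fixed points of `R ∘ R`.
(Here `f` is continuous with values in `[0,1]` on the nonnegative quadrant.) -/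

theorem RG_period_two_limit
    (f : ℝ → ℝ → ℝ)
    (hf : ∀ x y : ℝ, 0 ≤ x → 0 ≤ y → f x y ∈ Set.Icc (0 : ℝ) 1)
    (hfc : ContinuousOn (Function.uncurry f) {p : ℝ × ℝ | 0 ≤ p.1 ∧ 0 ≤ p.2})
    (φ0 φa φb : (ℕ → ℝ) → (ℕ → ℝ))
    (hconv_even : ∀ (A : ℕ → ℕ → ℝ) (a : ℕ → ℝ),
      (∀ n, Filter.Tendsto (fun M => A M n) Filter.atTop (nhds (a n))) →
      ∀ n, Filter.Tendsto (fun M => (RG f)^[2 * M] φ0 (A M) n) Filter.atTop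
        (nhds (φa a n)))
    (hconv_odd : ∀ (A : ℕ → ℕ → ℝ) (a : ℕ → ℝ),
      (∀ n, Filter.Tendsto (fun M => A M n) Filter.atTop (nhds (a n))) →
      ∀ n, Filter.Tendsto (fun M => (RG f)^[2 * M + 1] φ0 (A M) n) Filter.atTop
        (nhds (φb a n))) :
    RG f φa = φb ∧ RG f φb = φa ∧
      (RG f)^[2] φa = φa ∧ (RG f)^[2] φb = φb := by
  have hab : RG f φa = φb := by
    apply RG_limit_aux f (fun M => (RG f)^[2 * M] φ0) φa φb hconv_even
    intro a n
    have := hconv_odd (fun _ => a) a (fun k => tendsto_const_nhds) n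
    simpa [Function.iterate_succ_apply'] using this
  have hba : RG f φb = φa := by
    apply RG_limit_aux f (fun M => (RG f)^[2 * M + 1] φ0) φb φa hconv_odd
    intro a n
    have h := hconv_even (fun _ => a) a (fun k => tendsto_const_nhds) n
    have h' := h.comp (Filter.tendsto_add_atTop_nat 1)
    have : (fun M => (RG f)^[2 * (M + 1)] φ0 a n)
        = fun M => RG f ((RG f)^[2 * M + 1] φ0) a n := by
      funext M
      have : 2 * (M + 1) = (2 * M + 1) + 1 := by ring
      rw [this, Function.iterate_succ_apply']
    rw [show ((fun M => (RG f)^[2 * M] φ0 a n) ∘ fun M => M + 1)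
        = fun M => (RG f)^[2 * (M + 1)] φ0 a n from rfl, this] at h'
    exact h'
  refine ⟨hab, hba, ?_, ?_⟩
  · rw [Function.iterate_succ, Function.iterate_one]
    simp [Function.comp, hab, hba]
  · rw [Function.iterate_succ, Function.iterate_one]
    simp [Function.comp, hba, hab]
end
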